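/- arXiv:1712.03050 — 2 statements merged into one kernel-verified Lean document; each statement's English description precedes it below -/
import Mathlib

section
/- Let K be a compact metric space, A ⊆ K a closed subset, G an Abelian group, and α an open cover of K. If for some q ≥ 0 the natural map H^q(N(α), N(α|_A); G) → Ȟ^q(K, A; G) from the relative cohomology of the nerve pair into the Čech cohomology of the pair (K, A) is nonzero, then D(α) ≥ q. -/
open Filter Set
open scoped ENNReal

namespace MeanDimPaper

variable {X : Type*} [TopologicalSpace X]

/-- `α` is an open cover of `X`. -/
def IsOpenCover (α : Set (Set X)) : Prop :=
  (∀ U ∈ α, IsOpen U) ∧ ⋃₀ α = Set.univ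

/-- The order of a cover `α`: the maximum `n ≥ 0` such that there exist `n + 1`
pairwise distinct members of `α` with nonempty common intersection. -/
noncomputable def ord (α : Set (Set X)) : ℕ∞ :=
  ⨆ n ∈ {n : ℕ | ∃ f : Fin (n + 1) → Set X,
      Function.Injective f ∧ (∀ i, f i ∈ α) ∧ (⋂ i, f i).Nonempty}, (n : ℕ∞)

/-- `β` refines `α`: every member of `β` is contained in some member of `α`. -/
def Refines (β α : Set (Set X)) : Prop := ∀ V ∈ β, ∃ U ∈ α, V ⊆ U

/-- `D(α)`: the minimum of `ord β` over open covers `β` refining `α`. -/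
noncomputable def covD (α : Set (Set X)) : ℕ∞ :=
  ⨅ β ∈ {β : Set (Set X) | IsOpenCover β ∧ Refines β α}, ord β

/-- Topological (covering) dimension: the supremum of `D(α)` over open covers `α`. -/
noncomputable def topDim (X : Type*) [TopologicalSpace X] : ℕ∞ :=
  ⨆ α ∈ {α : Set (Set X) | IsOpenCover α}, covD α

/-- Diameter of a set with respect to a distance function `d`. -/
noncomputable def diamD (d : X → X → ℝ) (U : Set X) : ℝ :=
  sSup {r | ∃ x ∈ U, ∃ y ∈ U, r = d x y}

/-- Mesh of a cover: the supremum of the diameters of its members. -/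
noncomputable def mesh (d : X → X → ℝ) (α : Set (Set X)) : ℝ :=
  sSup (diamD d '' α)

/-- `widim_ε(X, d)`: the minimum of `D(α)` over open covers `α` with `mesh(α, d) < ε`. -/
noncomputable def widim (ε : ℝ) (d : X → X → ℝ) : ℕ∞ :=
  ⨅ α ∈ {α : Set (Set X) | IsOpenCover α ∧ mesh d α < ε}, covD α

/-- `d` is a metric on `X` compatible with the topology of `X`. -/
structure IsCompatMetric {X : Type*} [TopologicalSpace X] (d : X → X → ℝ) : Prop where
  refl : ∀ x, d x x = 0
  eq_of : ∀ x y, d x y = 0 → x = y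
  symm : ∀ x y, d x y = d y x
  triangle : ∀ x y z, d x z ≤ d x y + d y z
  isOpen_iff : ∀ U : Set X, IsOpen U ↔ ∀ x ∈ U, ∃ ε > 0, ∀ y, d x y < ε → y ∈ U

/-- The dynamical distance `d_n(x, y) = max_{0 ≤ i < n} d(Tⁱ x, Tⁱ y)`. -/
noncomputable def dynDist (d : X → X → ℝ) (T : X → X) (n : ℕ) (x y : X) : ℝ :=
  sSup {r | ∃ i < n, r = d (T^[i] x) (T^[i] y)}

/-- Mean dimension `mdim(X, T)` computed with the metric `d`:
`lim_{ε → 0} lim_{n → ∞} widim_ε(X, d_n) / n`.  The inner limit exists (by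
subadditivity of `n ↦ widim_ε(X, d_n)`) so it coincides with the liminf, and the inner
quantity is monotone as `ε` decreases, so the limit as `ε → 0` is the supremum over
`ε > 0`. -/
noncomputable def mdim (T : X → X) (d : X → X → ℝ) : ℝ≥0∞ :=
  ⨆ (ε : ℝ) (_ : 0 < ε),
    Filter.liminf (fun n : ℕ => (widim ε (dynDist d T n) : ℝ≥0∞) / (n : ℝ≥0∞)) Filter.atTop

/-- The full shift `σ` on the alphabet `K`: `σ((xₙ)ₙ) = (xₙ₊₁)ₙ`. -/
def shift (K : Type*) : (ℤ → K) → ℤ → K := fun x n => x (n + 1)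

variable {K : Type*} [TopologicalSpace K]

/-- An ordered `q`-simplex of the nerve complex `N(α)`: a `(q+1)`-tuple of members of `α`
with nonempty common intersection. -/
def IsNerveSimplex (α : Set (Set K)) {q : ℕ} (f : Fin (q + 1) → Set K) : Prop :=
  (∀ i, f i ∈ α) ∧ (⋂ i, f i).Nonempty

/-- The type of ordered `q`-simplices of the nerve `N(α)`. -/
def NerveSimplex (α : Set (Set K)) (q : ℕ) : Type _ :=
  {f : Fin (q + 1) → Set K // IsNerveSimplex α f}

/-- The `i`-th face of a `(q+1)`-simplex of the nerve. -/
def face {α : Set (Set K)} {q : ℕ} (g : NerveSimplex α (q + 1)) (i : Fin (q + 2)) :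
    NerveSimplex α q :=
  ⟨g.1 ∘ i.succAbove, ⟨fun j => g.2.1 _, by
    obtain ⟨x, hx⟩ := g.2.2
    exact ⟨x, Set.mem_iInter.2 fun j => Set.mem_iInter.1 hx _⟩⟩⟩

/-- A simplex of `N(α)` belongs to the subcomplex `N(α|_A)` iff the common intersection
of its members meets `A`. -/
def InSubNerve (A : Set K) {α : Set (Set K)} {q : ℕ} (f : NerveSimplex α q) : Prop :=
  ((⋂ i, f.1 i) ∩ A).Nonempty

/-- A relative cochain of the pair `(N(α), N(α|_A))`: a `G`-valued simplicial cochain on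
`N(α)` vanishing on the subcomplex `N(α|_A)`. -/
def IsRelCochain (A : Set K) {α : Set (Set K)} {q : ℕ} {G : Type*} [AddCommGroup G]
    (c : NerveSimplex α q → G) : Prop :=
  ∀ f, InSubNerve A f → c f = 0

/-- The simplicial coboundary operator. -/
def cob {α : Set (Set K)} {q : ℕ} {G : Type*} [AddCommGroup G]
    (c : NerveSimplex α q → G) (g : NerveSimplex α (q + 1)) : G :=
  ∑ i : Fin (q + 2), (-1 : ℤ) ^ (i : ℕ) • c (face g i)

/-- A relative `q`-cocycle of the pair `(N(α), N(α|_A))` with coefficients in `G`. -/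
def IsRelCocycle (A : Set K) {α : Set (Set K)} {q : ℕ} {G : Type*} [AddCommGroup G]
    (c : NerveSimplex α q → G) : Prop :=
  IsRelCochain A c ∧ ∀ g : NerveSimplex α (q + 1), cob c g = 0

/-- A relative `q`-coboundary of the pair `(N(α), N(α|_A))` with coefficients in `G`. -/
def IsRelCoboundary (A : Set K) {α : Set (Set K)} {G : Type*} [AddCommGroup G] :
    (q : ℕ) → (NerveSimplex α q → G) → Prop
  | 0, c => ∀ f, c f = 0
  | _ + 1, c => ∃ b, IsRelCochain A b ∧ ∀ g, cob b g = c g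

/-- The simplicial map `N(β) → N(α)` induced by a choice `r` assigning to each member of
the refinement `β` a member of `α` containing it. -/
def simplexMap {α β : Set (Set K)} (r : Set K → Set K)
    (hr : ∀ V ∈ β, V ⊆ r V ∧ r V ∈ α) {q : ℕ} (g : NerveSimplex β q) :
    NerveSimplex α q :=
  ⟨fun i => r (g.1 i), ⟨fun i => (hr _ (g.2.1 i)).2, by
    obtain ⟨x, hx⟩ := g.2.2
    exact ⟨x, Set.mem_iInter.2 fun i => (hr _ (g.2.1 i)).1 (Set.mem_iInter.1 hx i)⟩⟩⟩

/-- "The natural map `H^q(N(α), N(α|_A); G) → Ȟ^q(K, A; G)` is nonzero."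
Since the Čech cohomology `Ȟ^q(K, A; G)` is the directed colimit of the cohomologies of
the nerve pairs over refinement, this map is nonzero iff some relative `q`-cocycle `c`
on `(N(α), N(α|_A))` has the property that, for every open cover `β` refining `α`, the
pullback of `c` along any choice of induced simplicial map `N(β) → N(α)` is not a
relative coboundary (all such choices induce the same map on cohomology). -/
def NerveToCechNonzero (α : Set (Set K)) (A : Set K) (G : Type*) [AddCommGroup G]
    (q : ℕ) : Prop :=
  ∃ c : NerveSimplex α q → G, IsRelCocycle A c ∧
    ∀ β : Set (Set K), IsOpenCover β → Refines β α →
      ∀ (r : Set K → Set K) (hr : ∀ V ∈ β, V ⊆ r V ∧ r V ∈ α),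
        ¬ IsRelCoboundary A q (fun g : NerveSimplex β q => c (simplexMap r hr g))

/-- Cohomological dimension `dim_G K`: the supremum of all `q ≥ 0` such that
`Ȟ^q(K, A; G) ≠ 0` for some closed subset `A ⊆ K`.  An element of the colimit
`Ȟ^q(K, A; G)` is nonzero iff it is represented at some stage `α` by a cocycle class
with nonzero image in the colimit. -/
noncomputable def cohomDim (G : Type*) [AddCommGroup G] (K : Type*) [TopologicalSpace K] :
    ℕ∞ :=
  ⨆ q ∈ {q : ℕ | ∃ A : Set K, IsClosed A ∧
      ∃ α : Set (Set K), IsOpenCover α ∧ NerveToCechNonzero α A G q}, (q : ℕ∞)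

/-!
Suppose some open cover `β` refining `α` had `ord β < q`, and pull the given cocycle `c` back
to a relative cocycle `c'` on the ordered nerve of `β`. Order the vertices linearly. On the
complex of all ordered tuples, the cone construction on the first vertex yields a chain homotopy
`H` between the identity and the alternation `S` (sorting with the sign of the sorting
permutation, zero on tuples with a repeated vertex). The value of `H` at a simplex only involves
tuples built from the vertices of that simplex, so `H` respects the nerve and the subnerve of
`A`. Since `ord β < q`, every `q`-simplex of `N(β)` repeats a vertex, so `S c' = 0` and
`c' = δ(-H c')` is a relative coboundary, contradicting `NerveToCechNonzero`.
-/

section Permutations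

open Equiv

lemma exists_perm_comp_succAbove {n : ℕ} (σ : Perm (Fin (n + 2))) (i : Fin (n + 2)) :
    ∃ τ : Perm (Fin (n + 1)), σ ∘ i.succAbove = (σ i).succAbove ∘ τ ∧
      Perm.sign σ = (-1) ^ ((i : ℕ) + (σ i : ℕ)) * Perm.sign τ := by
  -- conjugating by cycles moves `i` and `σ i` to `0`, leaving a permutation that fixes `0`
  set ρ := Fin.cycleRange (σ i) * σ * (Fin.cycleRange i)⁻¹
  set τ := (Perm.decomposeFin ρ).2
  have hρ : ρ = Perm.decomposeFin.symm (0, τ) := by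
    have hfst : (Perm.decomposeFin ρ).1 = 0 := by
      rw [← Perm.decomposeFin_symm_apply_zero (Perm.decomposeFin ρ).1 τ, Prod.mk.eta,
        Equiv.symm_apply_apply]
      simp [ρ, Perm.inv_def, Fin.cycleRange_symm_zero]
    rw [← hfst, Prod.mk.eta, Equiv.symm_apply_apply]
  refine ⟨τ, funext fun k => ?_, ?_⟩
  · apply (Fin.cycleRange (σ i)).injective
    have := congrArg (· k.succ) hρ
    simp only [ρ, Perm.mul_apply, Perm.inv_def, Fin.cycleRange_symm_succ,
      Perm.decomposeFin_symm_apply_succ, swap_self, refl_apply] at this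
    simp [this, Fin.cycleRange_succAbove]
  · have := congrArg Perm.sign hρ
    simp only [ρ, map_mul, map_inv, Fin.sign_cycleRange, Int.units_inv_eq_self,
      Perm.decomposeFin.symm_sign, if_pos, one_mul] at this
    rw [← this, pow_add]
    calc Perm.sign σ
        = ((-1) ^ (i : ℕ) * (-1) ^ (i : ℕ)) * ((-1) ^ (σ i : ℕ) * (-1) ^ (σ i : ℕ)) *
            Perm.sign σ := by simp [Int.units_mul_self]
      _ = _ := by ac_rfl

lemma comp_swap_of_eq {α β : Type*} [DecidableEq α] {f : α → β} {a b : α} (h : f a = f b) :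
    f ∘ swap a b = f := by
  funext k
  simp only [Function.comp_apply, swap_apply_def]
  split_ifs <;> simp_all

lemma not_injective_comp_succAbove {V : Type*} {n : ℕ} {f : Fin (n + 2) → V} {a b : Fin (n + 2)}
    (hab : a ≠ b) (hf : f a = f b) {j : Fin (n + 2)} (ha : j ≠ a) (hb : j ≠ b) :
    ¬ Function.Injective (f ∘ j.succAbove) := by
  obtain ⟨a', rfl⟩ := Fin.exists_succAbove_eq ha.symm
  obtain ⟨b', rfl⟩ := Fin.exists_succAbove_eq hb.symm
  exact fun hinj => hab (congrArg _ (hinj hf))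

end Permutations

section OrderedCochain

open Equiv Function

variable {V G : Type*} [AddCommGroup G]

abbrev TupleCochain (V G : Type*) (n : ℕ) : Type _ := (Fin (n + 1) → V) → G

def tupleCob {n : ℕ} : TupleCochain V G n →+ TupleCochain V G (n + 1) where
  toFun c f := ∑ i : Fin (n + 2), (-1 : ℤ) ^ (i : ℕ) • c (f ∘ i.succAbove)
  map_zero' := by ext; simp
  map_add' c d := by ext; simp [Finset.sum_add_distrib]

lemma tupleCob_apply {n : ℕ} (c : TupleCochain V G n) (f : Fin (n + 2) → V) :
    tupleCob c f = ∑ i : Fin (n + 2), (-1 : ℤ) ^ (i : ℕ) • c (f ∘ i.succAbove) := rfl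

def cone {n : ℕ} (w : V) : TupleCochain V G (n + 1) →+ TupleCochain V G n where
  toFun c f := c (Fin.cons w f)
  map_zero' := rfl
  map_add' _ _ := rfl

lemma cone_apply {n : ℕ} (w : V) (c : TupleCochain V G (n + 1)) (f : Fin (n + 1) → V) :
    cone w c f = c (Fin.cons w f) := rfl

lemma tupleCob_cone_add_cone_tupleCob {n : ℕ} (w : V) (c : TupleCochain V G (n + 1)) :
    tupleCob (cone w c) + cone w (tupleCob c) = c := by
  ext f
  have hface (i : Fin (n + 2)) : i.removeNth f = f ∘ i.succAbove := rfl
  simp [tupleCob_apply, cone_apply, Fin.sum_univ_succ (n := n + 2), pow_succ, hface]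

lemma tupleCob_tupleCob {n : ℕ} (c : TupleCochain V G n) : tupleCob (tupleCob c) = 0 := by
  induction n with
  | zero =>
    obtain ⟨c, rfl⟩ : ∃ c₀ : V → G, c = fun g => c₀ (g 0) :=
      ⟨fun v => c fun _ => v,
        funext fun g => congrArg c (funext fun i => by rw [Fin.fin_one_eq_zero i])⟩
    ext f
    simp [tupleCob_apply, Fin.sum_univ_succ]
    abel
  | succ n ih =>
    ext f
    have h : cone (f 0) (tupleCob (tupleCob c)) = 0 := by
      rw [eq_sub_of_add_eq' (tupleCob_cone_add_cone_tupleCob _ (tupleCob c)),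
        eq_sub_of_add_eq' (tupleCob_cone_add_cone_tupleCob _ c), map_sub, ih, sub_zero,
        sub_self]
    rw [← Fin.cons_self_tail f]
    exact congrFun h _

def IsAlternating {n : ℕ} (d : TupleCochain V G n) : Prop :=
  (∀ f (π : Perm (Fin (n + 1))), d (f ∘ π) = Perm.sign π • d f) ∧
    ∀ f, ¬ Injective f → d f = 0

lemma IsAlternating.tupleCob_comp_perm {n : ℕ} {d : TupleCochain V G n} (hd : IsAlternating d)
    (f : Fin (n + 2) → V) (σ : Perm (Fin (n + 2))) :
    tupleCob d (f ∘ σ) = Perm.sign σ • tupleCob d f := by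
  choose τ hτ using exists_perm_comp_succAbove σ
  have hterm (i : Fin (n + 2)) : (-1 : ℤ) ^ (i : ℕ) • d ((f ∘ σ) ∘ i.succAbove)
      = Perm.sign σ • (-1 : ℤ) ^ (σ i : ℕ) • d (f ∘ (σ i).succAbove) := by
    rw [comp_assoc, (hτ i).1, ← comp_assoc, hd.1, (hτ i).2]
    simp only [Units.smul_def, smul_smul]
    congr 1
    push_cast
    ring_nf
    simp [pow_mul']
  rw [tupleCob_apply, tupleCob_apply, Finset.smul_sum, Fintype.sum_congr _ _ hterm]
  exact Equiv.sum_comp σ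
    (fun j => Perm.sign σ • (-1 : ℤ) ^ (j : ℕ) • d (f ∘ j.succAbove))

lemma IsAlternating.tupleCob_apply_of_not_injective {n : ℕ} {d : TupleCochain V G n}
    (hd : IsAlternating d) {f : Fin (n + 2) → V} (hf : ¬ Injective f) : tupleCob d f = 0 := by
  obtain ⟨a, b, hfab, hab⟩ := not_injective_iff.mp hf
  -- only the faces omitting `a` or `b` can be injective, and they cancel
  rw [tupleCob_apply, Fintype.sum_eq_add a b hab fun j ⟨ha, hb⟩ => by
    rw [hd.2 _ (not_injective_comp_succAbove hab hfab ha hb), smul_zero]]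
  obtain ⟨τ, hcomm, hsign⟩ := exists_perm_comp_succAbove (swap a b) a
  rw [swap_apply_left, Perm.sign_swap hab] at hsign
  rw [swap_apply_left] at hcomm
  have hface : f ∘ a.succAbove = (f ∘ b.succAbove) ∘ τ := by
    rw [comp_assoc, ← hcomm, ← comp_assoc, comp_swap_of_eq hfab]
  have hsign' := congrArg Units.val hsign
  push_cast at hsign'
  rw [hface, hd.1, Units.smul_def, smul_smul, ← add_smul]
  convert zero_smul ℤ (d (f ∘ b.succAbove))
  have hsq : ((-1 : ℤ) ^ (b : ℕ)) ^ 2 = 1 := by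
    rw [← pow_mul, mul_comm, pow_mul, neg_one_sq, one_pow]
  linear_combination (-(-1 : ℤ) ^ (b : ℕ)) * hsign'
    - ((-1 : ℤ) ^ (a : ℕ) * (Perm.sign τ : ℤ)) * hsq

lemma IsAlternating.tupleCob {n : ℕ} {d : TupleCochain V G n} (hd : IsAlternating d) :
    IsAlternating (tupleCob d) :=
  ⟨hd.tupleCob_comp_perm, fun _ => hd.tupleCob_apply_of_not_injective⟩

variable [LinearOrder V]

open scoped Classical in
noncomputable def alternate {n : ℕ} : TupleCochain V G n →+ TupleCochain V G n where
  toFun c f := if Injective f then Perm.sign (Tuple.sort f) • c (f ∘ Tuple.sort f) else 0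
  map_zero' := by ext; simp
  map_add' c d := by ext f; split_ifs <;> simp [*, smul_add]

lemma alternate_apply_of_injective {n : ℕ} (c : TupleCochain V G n) {f : Fin (n + 1) → V}
    (hf : Injective f) : alternate c f = Perm.sign (Tuple.sort f) • c (f ∘ Tuple.sort f) := by
  simp [alternate, hf]

lemma alternate_apply_of_not_injective {n : ℕ} (c : TupleCochain V G n) {f : Fin (n + 1) → V}
    (hf : ¬ Injective f) : alternate c f = 0 := by
  simp [alternate, hf]

lemma alternate_apply_of_strictMono {n : ℕ} (c : TupleCochain V G n) {f : Fin (n + 1) → V}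
    (hf : StrictMono f) : alternate c f = c f := by
  rw [alternate_apply_of_injective c hf.injective,
    (Tuple.sort_eq_refl_iff_monotone (f := f)).mpr hf.monotone]
  simp

lemma alternate_eq_self_of_zero (c : TupleCochain V G 0) : alternate c = c :=
  funext fun _ => alternate_apply_of_strictMono c (Subsingleton.strictMono (α := Fin 1) _)

lemma isAlternating_alternate {n : ℕ} (c : TupleCochain V G n) :
    IsAlternating (alternate c) := by
  refine ⟨fun f π => ?_, fun f => alternate_apply_of_not_injective c⟩
  by_cases hf : Injective f
  · have hfπ : Injective (f ∘ π) := hf.comp π.injective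
    have hsort : π * Tuple.sort (f ∘ π) = Tuple.sort f :=
      coe_fn_injective (hf.comp_left (Tuple.comp_perm_comp_sort_eq_comp_sort (f := f) (σ := π)))
    rw [alternate_apply_of_injective c hf, alternate_apply_of_injective c hfπ,
      Tuple.comp_perm_comp_sort_eq_comp_sort, smul_smul, ← hsort, map_mul, ← mul_assoc,
      Int.units_mul_self, one_mul]
  · have hfπ : ¬ Injective (f ∘ π) := fun h => hf (by simpa using h.comp π.symm.injective)
    rw [alternate_apply_of_not_injective c hf, alternate_apply_of_not_injective c hfπ, smul_zero]

lemma tupleCob_alternate {n : ℕ} (c : TupleCochain V G n) :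
    tupleCob (alternate c) = alternate (tupleCob c) := by
  ext f
  by_cases hf : Injective f
  · set σ := Tuple.sort f
    have hmono : StrictMono (f ∘ σ) :=
      (Tuple.monotone_sort f).strictMono_of_injective (hf.comp σ.injective)
    -- the faces of a strictly monotone tuple are strictly monotone, where `alternate c = c`
    have hsorted : tupleCob c (f ∘ σ) = tupleCob (alternate c) (f ∘ σ) := by
      rw [tupleCob_apply, tupleCob_apply]
      refine Fintype.sum_congr _ _ fun i => ?_
      rw [alternate_apply_of_strictMono c (hmono.comp (Fin.strictMono_succAbove i))]
    rw [alternate_apply_of_injective _ hf, hsorted,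
      (isAlternating_alternate c).tupleCob_comp_perm, smul_smul, Int.units_mul_self, one_smul]
  · rw [alternate_apply_of_not_injective _ hf,
      (isAlternating_alternate c).tupleCob_apply_of_not_injective hf]

/-- Dual to the chain homotopy `h σ = σ 0 ⋆ (S σ - σ - h ∂σ)` between the alternation `S`
and the identity, where `w ⋆ -` prepends the vertex `w` (the cone on `w`). -/
noncomputable def homotopy : (n : ℕ) → TupleCochain V G (n + 1) →+ TupleCochain V G n
  | 0 => 0
  | n + 1 =>
    { toFun c f := alternate (cone (f 0) c) f - cone (f 0) c f
        - tupleCob (homotopy n (cone (f 0) c)) f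
      map_zero' := by ext; simp
      map_add' c d := by ext; simp only [map_add, Pi.add_apply]; abel }

lemma homotopy_succ_apply {n : ℕ} (c : TupleCochain V G (n + 2)) (f : Fin (n + 2) → V) :
    homotopy (n + 1) c f = alternate (cone (f 0) c) f - cone (f 0) c f
      - tupleCob (homotopy n (cone (f 0) c)) f := rfl

lemma homotopy_tupleCob_add_tupleCob_homotopy_step {n : ℕ}
    (hlow : ∀ d : TupleCochain V G n,
      tupleCob (homotopy n (tupleCob d)) = tupleCob (alternate d - d))
    (c : TupleCochain V G (n + 1)) :
    homotopy (n + 1) (tupleCob c) + tupleCob (homotopy n c) = alternate c - c := by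
  ext f
  have hcone := eq_sub_of_add_eq' (tupleCob_cone_add_cone_tupleCob (f 0) c)
  rw [Pi.add_apply, homotopy_succ_apply, hcone, map_sub, map_sub, map_sub, hlow,
    ← tupleCob_alternate, map_sub]
  simp only [Pi.sub_apply]
  abel

theorem homotopy_tupleCob_add_tupleCob_homotopy {n : ℕ} (c : TupleCochain V G (n + 1)) :
    homotopy (n + 1) (tupleCob c) + tupleCob (homotopy n c) = alternate c - c := by
  induction n with
  | zero =>
    refine homotopy_tupleCob_add_tupleCob_homotopy_step (fun d => ?_) c
    rw [alternate_eq_self_of_zero, sub_self]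
    rfl
  | succ n ih =>
    refine homotopy_tupleCob_add_tupleCob_homotopy_step (fun d => ?_) c
    rw [← ih d, map_add, tupleCob_tupleCob, add_zero]

omit [LinearOrder V] in
def VanishesOn (W : Set V) {n : ℕ} (c : TupleCochain V G n) : Prop :=
  ∀ f, Set.range f ⊆ W → c f = 0

omit [LinearOrder V] in
lemma VanishesOn.tupleCob {W : Set V} {n : ℕ} {c : TupleCochain V G n} (hc : VanishesOn W c) :
    VanishesOn W (tupleCob c) := fun f hf => by
  rw [tupleCob_apply]
  exact Finset.sum_eq_zero fun i _ => by
    rw [hc _ ((Set.range_comp_subset_range _ f).trans hf), smul_zero]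

omit [LinearOrder V] in
lemma VanishesOn.cone {W : Set V} {n : ℕ} {c : TupleCochain V G (n + 1)} (hc : VanishesOn W c)
    {w : V} (hw : w ∈ W) : VanishesOn W (cone w c) := fun f hf =>
  hc _ (by rw [Fin.range_cons]; exact Set.insert_subset hw hf)

lemma VanishesOn.alternate {W : Set V} {n : ℕ} {c : TupleCochain V G n} (hc : VanishesOn W c) :
    VanishesOn W (alternate c) := fun f hf => by
  by_cases hinj : Injective f
  · rw [alternate_apply_of_injective c hinj,
      hc _ ((Set.range_comp_subset_range _ f).trans hf), smul_zero]
  · exact alternate_apply_of_not_injective c hinj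

lemma VanishesOn.homotopy {W : Set V} {n : ℕ} {c : TupleCochain V G (n + 1)}
    (hc : VanishesOn W c) : VanishesOn W (homotopy n c) := by
  induction n with
  | zero => exact fun _ _ => rfl
  | succ n ih =>
    intro f hf
    have hcone := hc.cone (hf (Set.mem_range_self 0))
    rw [homotopy_succ_apply, hcone.alternate f hf, hcone f hf, (ih hcone).tupleCob f hf,
      sub_zero, sub_zero]

theorem tupleCob_homotopy_apply_of_not_injective {n : ℕ} {c : TupleCochain V G (n + 1)}
    {g : Fin (n + 2) → V} (hg : ¬ Injective g)
    (hc : VanishesOn (Set.range g) (tupleCob c)) : tupleCob (homotopy n c) g = -c g := by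
  have h := congrFun (homotopy_tupleCob_add_tupleCob_homotopy c) g
  rw [Pi.add_apply, hc.homotopy g subset_rfl, zero_add, Pi.sub_apply,
    alternate_apply_of_not_injective c hg, zero_sub] at h
  exact h

end OrderedCochain
section Nerve

omit [TopologicalSpace X] [TopologicalSpace K]

variable {G : Type*} [AddCommGroup G]

lemma iInter_subset_iInter_of_range_subset {α ι ι' : Type*} {f : ι → Set α}
    {g : ι' → Set α} (h : Set.range f ⊆ Set.range g) : ⋂ i, g i ⊆ ⋂ i, f i := by
  rw [← Set.sInter_range, ← Set.sInter_range]
  exact Set.sInter_subset_sInter h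

lemma IsNerveSimplex.of_range_subset {β : Set (Set K)} {m n : ℕ} {g : Fin (m + 1) → Set K}
    (hg : IsNerveSimplex β g) {f : Fin (n + 1) → Set K} (h : Set.range f ⊆ Set.range g) :
    IsNerveSimplex β f := by
  refine ⟨fun i => ?_, hg.2.mono (iInter_subset_iInter_of_range_subset h)⟩
  obtain ⟨k, hk⟩ := h (Set.mem_range_self i)
  exact hk ▸ hg.1 k

open scoped Classical in
noncomputable def extendByZero {β : Set (Set K)} {n : ℕ} (c : NerveSimplex β n → G) :
    TupleCochain (Set K) G n :=
  fun f => if hf : IsNerveSimplex β f then c ⟨f, hf⟩ else 0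

lemma extendByZero_apply {β : Set (Set K)} {n : ℕ} (c : NerveSimplex β n → G)
    {f : Fin (n + 1) → Set K} (hf : IsNerveSimplex β f) : extendByZero c f = c ⟨f, hf⟩ :=
  dif_pos hf

lemma tupleCob_extendByZero_apply {β : Set (Set K)} {n : ℕ} (c : NerveSimplex β n → G)
    (g : NerveSimplex β (n + 1)) : tupleCob (extendByZero c) g.1 = cob c g := by
  rw [tupleCob_apply, cob]
  exact Finset.sum_congr rfl fun i _ => congrArg _ (extendByZero_apply c (face g i).2)

lemma IsRelCochain.vanishesOn_extendByZero {A : Set K} {β : Set (Set K)} {n : ℕ}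
    {c : NerveSimplex β n → G} (hc : IsRelCochain A c) {m : ℕ} {g : NerveSimplex β m}
    (hg : InSubNerve A g) : VanishesOn (Set.range g.1) (extendByZero c) := fun f hf => by
  rw [extendByZero_apply c (g.2.of_range_subset hf)]
  exact hc _ (hg.mono (Set.inter_subset_inter_left A (iInter_subset_iInter_of_range_subset hf)))

lemma vanishesOn_tupleCob_extendByZero {β : Set (Set K)} {n : ℕ} {c : NerveSimplex β n → G}
    (hc : ∀ g : NerveSimplex β (n + 1), cob c g = 0) {m : ℕ} (g : NerveSimplex β m) :
    VanishesOn (Set.range g.1) (tupleCob (extendByZero c)) := fun f hf => by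
  rw [tupleCob_extendByZero_apply c ⟨f, g.2.of_range_subset hf⟩]
  exact hc _

theorem isRelCoboundary_of_forall_not_injective {A : Set K} {β : Set (Set K)} {n : ℕ}
    {c : NerveSimplex β (n + 1) → G} (hc : IsRelCocycle A c)
    (hinj : ∀ g : NerveSimplex β (n + 1), ¬ Function.Injective g.1) :
    IsRelCoboundary A (n + 1) c := by
  let : LinearOrder (Set K) := IsWellOrder.linearOrder WellOrderingRel
  refine ⟨fun g => -homotopy n (extendByZero c) g.1, fun g hg => ?_, fun g => ?_⟩
  · change -homotopy n (extendByZero c) g.1 = 0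
    rw [(hc.1.vanishesOn_extendByZero hg).homotopy g.1 le_rfl, neg_zero]
  · change tupleCob (-homotopy n (extendByZero c)) g.1 = c g
    rw [map_neg, Pi.neg_apply, tupleCob_homotopy_apply_of_not_injective (hinj g)
      (vanishesOn_tupleCob_extendByZero hc.2 g), neg_neg, extendByZero_apply c g.2]
    rfl

lemma IsRelCocycle.comp_simplexMap {A : Set K} {α β : Set (Set K)} {q : ℕ} {r : Set K → Set K}
    (hr : ∀ V ∈ β, V ⊆ r V ∧ r V ∈ α) {c : NerveSimplex α q → G}
    (hc : IsRelCocycle A c) :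
    IsRelCocycle A fun g : NerveSimplex β q => c (simplexMap r hr g) :=
  ⟨fun g hg => hc.1 _ (hg.mono (Set.inter_subset_inter_left A
      (Set.iInter_mono fun i => (hr _ (g.2.1 i)).1))),
    fun g => hc.2 (simplexMap r hr g)⟩

lemma le_ord_of_injective {β : Set (Set K)} {n : ℕ} (g : NerveSimplex β n)
    (hg : Function.Injective g.1) : (n : ℕ∞) ≤ ord β :=
  le_iSup₂ (f := fun (m : ℕ) (_ : m ∈ {m : ℕ | ∃ f : Fin (m + 1) → Set K,
    Function.Injective f ∧ (∀ i, f i ∈ β) ∧ (⋂ i, f i).Nonempty}) => (m : ℕ∞))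
    n ⟨g.1, hg, g.2.1, g.2.2⟩

lemma Refines.exists_map {α β : Set (Set X)} (h : Refines β α) :
    ∃ r : Set X → Set X, ∀ V ∈ β, V ⊆ r V ∧ r V ∈ α := by
  classical
  choose U hU using h
  exact ⟨fun V => if hV : V ∈ β then U V hV else V, fun V hV => by
    simp only [dif_pos hV]; exact ⟨(hU V hV).2, (hU V hV).1⟩⟩

end Nerve

theorem covD_ge_of_nerveToCechNonzero_general {K : Type*} [MetricSpace K]
    (A : Set K) (G : Type*) [AddCommGroup G]
    (α : Set (Set K)) (q : ℕ)
    (h : NerveToCechNonzero α A G q) :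
    (q : ℕ∞) ≤ covD α := by
  obtain ⟨c, hc, hnot⟩ := h
  obtain _ | n := q
  · exact bot_le
  refine le_iInf₂ fun β ⟨hβ, hβα⟩ => ?_
  by_contra! hlt
  obtain ⟨r, hr⟩ := hβα.exists_map
  exact hnot β hβ hβα r hr (isRelCoboundary_of_forall_not_injective (hc.comp_simplexMap hr)
    fun g hg => (le_ord_of_injective g hg).not_gt hlt)

/-- if the natural map `H^q(N(α), N(α|_A); G) → Ȟ^q(K, A; G)` is nonzero
for some `q ≥ 0`, then `D(α) ≥ q`. -/
theorem covD_ge_of_nerveToCechNonzero {K : Type*} [MetricSpace K] [CompactSpace K]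
    (A : Set K) (hA : IsClosed A) (G : Type*) [AddCommGroup G]
    (α : Set (Set K)) (hα : IsOpenCover α) (q : ℕ)
    (h : NerveToCechNonzero α A G q) :
    (q : ℕ∞) ≤ covD α :=
  covD_ge_of_nerveToCechNonzero_general A G α q h

end MeanDimPaper
end

section
/- Let (K, ρ) be a compact metric space, p ∈ K a fixed point, and define the distance d on K^ℤ by d((x_i), (y_i)) = Σ_{i∈ℤ} 2^{−|i|} ρ(x_i, y_i), and for n ≥ 1 the distance d_n on K^ℤ by d_n(x,y) = max_{0≤i<n} d(σⁱx, σⁱy), where σ is the full shift. Let ρ_n be the sup metric on Kⁿ, ρ_n((x₀,…,x_{n−1}),(y₀,…,y_{n−1})) = max_{0≤i<n} ρ(x_i,y_i). Then for every ε > 0 and every n ≥ 1, widim_ε(K^ℤ, d_n) ≥ widim_ε(Kⁿ, ρ_n). -/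
open Filter Set
open scoped ENNReal

namespace MeanDimPaper

variable {X : Type*} [TopologicalSpace X]

/-- Embedding of `Kⁿ` into `K^ℤ` placing the block at coordinates `0, …, n-1` and `p`
elsewhere. -/
noncomputable def emb {K : Type*} (p : K) (n : ℕ) (x : Fin n → K) : ℤ → K :=
  fun m => if h : 0 ≤ m ∧ m < n then x ⟨m.toNat, by omega⟩ else p

lemma shift_iter {K : Type*} (i : ℕ) (x : ℤ → K) (m : ℤ) :
    (shift K)^[i] x m = x (m + i) := by
  induction i generalizing x m with
  | zero => simp
  | succ i ih =>
    rw [Function.iterate_succ_apply, ih]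
    show x (m + i + 1) = _
    congr 1
    push_cast
    ring

lemma emb_coord {K : Type*} (p : K) (n : ℕ) (x : Fin n → K) (i : Fin n) :
    emb p n x ((i : ℕ) : ℤ) = x i := by
  rw [emb, dif_pos ⟨Int.natCast_nonneg _, by exact_mod_cast i.isLt⟩]
  congr 1

lemma ord_preimage_le {X Y : Type*} [TopologicalSpace X] [TopologicalSpace Y] (g : X → Y)
    (β : Set (Set Y)) : ord ((fun U => g ⁻¹' U) '' β) ≤ ord β := by
  apply biSup_mono
  rintro m ⟨f, hinj, hmem, x, hx⟩
  choose F hF hFe using hmem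
  refine ⟨F, fun i j hij => hinj ?_, hF, g x, Set.mem_iInter.2 fun i => ?_⟩
  · rw [← hFe i, ← hFe j, hij]
  · have := Set.mem_iInter.1 hx i
    rw [← hFe i] at this
    exact this

/-- with `d` the metric `d(x,y) = Σ_{i ∈ ℤ} 2^{-|i|} ρ(x_i, y_i)` on `K^ℤ`
and `d_n` the associated dynamical metrics for the full shift, and `ρ_n` the sup metric
on `Kⁿ` (the distance of the product metric space `Fin n → K`), one has
`widim_ε(K^ℤ, d_n) ≥ widim_ε(Kⁿ, ρ_n)` for all `ε > 0` and `n ≥ 1`. -/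
theorem widim_fullshift_ge_widim_pow {K : Type*} [MetricSpace K] [CompactSpace K]
    (p : K) (d : (ℤ → K) → (ℤ → K) → ℝ)
    (hd : d = fun x y => ∑' i : ℤ, (2 : ℝ) ^ (-(|i| : ℤ)) * dist (x i) (y i))
    (ε : ℝ) (hε : 0 < ε) (n : ℕ) (hn : 1 ≤ n) :
    widim ε (fun x y : Fin n → K => dist x y) ≤ widim ε (dynDist d (shift K) n) := by
  classical
  obtain ⟨C0, hC0⟩ := Metric.isBounded_iff.mp (isCompact_univ (X := K)).isBounded
  set C : ℝ := max C0 0 with hCdef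
  have hC : ∀ a b : K, dist a b ≤ C := fun a b =>
    le_trans (hC0 (Set.mem_univ a) (Set.mem_univ b)) (le_max_left _ _)
  have hCnn : (0 : ℝ) ≤ C := le_max_right _ _
  have hsum : Summable (fun j : ℤ => (2 : ℝ) ^ (-(|j| : ℤ))) := by
    have h1 : Summable (fun m : ℕ => (2 : ℝ) ^ (-(m : ℤ))) := by
      have := summable_geometric_of_lt_one (by norm_num : (0:ℝ) ≤ 2⁻¹) (by norm_num)
      refine this.congr fun m => ?_
      rw [zpow_neg, zpow_natCast, inv_pow]
    apply Summable.of_nat_of_neg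
    · simpa using h1
    · simpa using h1
  have hsum2 : ∀ a b : ℤ → K,
      Summable (fun j : ℤ => (2 : ℝ) ^ (-(|j| : ℤ)) * dist (a j) (b j)) := fun a b =>
    Summable.of_nonneg_of_le (fun j => mul_nonneg (by positivity) dist_nonneg)
      (fun j => mul_le_mul_of_nonneg_left (hC _ _) (by positivity)) (hsum.mul_right C)
  have hd_nonneg : ∀ a b, 0 ≤ d a b := by
    intro a b; rw [hd]
    exact tsum_nonneg fun j => mul_nonneg (by positivity) dist_nonneg
  set M : ℝ := ∑' j : ℤ, (2 : ℝ) ^ (-(|j| : ℤ)) * C with hMdef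
  have hMnn : 0 ≤ M := tsum_nonneg fun j => mul_nonneg (by positivity) hCnn
  have hdM : ∀ a b, d a b ≤ M := by
    intro a b; rw [hd]
    exact Summable.tsum_le_tsum (fun j => mul_le_mul_of_nonneg_left (hC _ _) (by positivity))
      (hsum2 a b) (hsum.mul_right C)
  have hDM : ∀ x y, dynDist d (shift K) n x y ≤ M := fun x y =>
    Real.sSup_le (by rintro r ⟨i, hi, rfl⟩; exact hdM _ _) hMnn
  have hD_nonneg : ∀ x y, 0 ≤ dynDist d (shift K) n x y := fun x y =>
    Real.sSup_nonneg (by rintro r ⟨i, hi, rfl⟩; exact hd_nonneg _ _)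
  -- key inequality
  have hkey : ∀ x y : Fin n → K,
      dist x y ≤ dynDist d (shift K) n (emb p n x) (emb p n y) := by
    intro x y
    rw [dist_pi_le_iff (hD_nonneg _ _)]
    intro i
    have h1 : dist (x i) (y i) ≤
        d ((shift K)^[(i : ℕ)] (emb p n x)) ((shift K)^[(i : ℕ)] (emb p n y)) := by
      rw [hd]
      have := Summable.le_tsum (hsum2 ((shift K)^[(i : ℕ)] (emb p n x)) ((shift K)^[(i : ℕ)] (emb p n y)))
        0 (fun j _ => mul_nonneg (by positivity) dist_nonneg)
      simpa [shift_iter, emb_coord] using this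
    refine le_trans h1 (le_csSup ⟨M, ?_⟩ ⟨(i : ℕ), i.isLt, rfl⟩)
    rintro r ⟨j, hj, rfl⟩; exact hdM _ _
  have hι : Continuous (emb p n) := by
    apply continuous_pi
    intro m
    unfold emb
    by_cases h : 0 ≤ m ∧ m < n
    · simp only [dif_pos h]; exact continuous_apply _
    · simp only [dif_neg h]; exact continuous_const
  refine le_iInf₂ fun α hα => ?_
  obtain ⟨hαcov, hαmesh⟩ := hα
  refine le_iInf₂ fun β hβ => ?_
  obtain ⟨hβcov, hβref⟩ := hβ
  set α' : Set (Set (Fin n → K)) := (fun U => emb p n ⁻¹' U) '' α with hα'def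
  set β' : Set (Set (Fin n → K)) := (fun U => emb p n ⁻¹' U) '' β with hβ'def
  have hcov : ∀ γ : Set (Set (ℤ → K)), IsOpenCover γ →
      IsOpenCover ((fun U => emb p n ⁻¹' U) '' γ) := by
    intro γ hγ
    constructor
    · rintro _ ⟨U, hU, rfl⟩; exact (hγ.1 U hU).preimage hι
    · apply Set.eq_univ_of_forall
      intro z
      have hz : emb p n z ∈ ⋃₀ γ := hγ.2 ▸ Set.mem_univ _
      obtain ⟨U, hU, hzU⟩ := hz
      exact ⟨emb p n ⁻¹' U, ⟨U, hU, rfl⟩, hzU⟩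
  have hmesh_nonneg : 0 ≤ mesh (dynDist d (shift K) n) α :=
    Real.sSup_nonneg (by
      rintro r ⟨U, hU, rfl⟩
      exact Real.sSup_nonneg (by rintro r ⟨a, ha, b, hb, rfl⟩; exact hD_nonneg a b))
  have hbdd : BddAbove (diamD (dynDist d (shift K) n) '' α) := by
    refine ⟨M, ?_⟩
    rintro r ⟨U, hU, rfl⟩
    exact Real.sSup_le (by rintro r ⟨a, ha, b, hb, rfl⟩; exact hDM a b) hMnn
  have hmesh' : mesh (fun x y : Fin n → K => dist x y) α' ≤ mesh (dynDist d (shift K) n) α := by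
    refine Real.sSup_le ?_ hmesh_nonneg
    rintro _ ⟨V, ⟨U, hU, rfl⟩, rfl⟩
    refine Real.sSup_le ?_ hmesh_nonneg
    rintro _ ⟨a, ha, b, hb, rfl⟩
    calc dist a b ≤ dynDist d (shift K) n (emb p n a) (emb p n b) := hkey a b
      _ ≤ diamD (dynDist d (shift K) n) U := by
          refine le_csSup ⟨M, ?_⟩ ⟨emb p n a, ha, emb p n b, hb, rfl⟩
          rintro r ⟨u, hu, v, hv, rfl⟩; exact hDM u v
      _ ≤ mesh (dynDist d (shift K) n) α := le_csSup hbdd ⟨U, hU, rfl⟩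
  have hrefines : Refines β' α' := by
    rintro _ ⟨V, hV, rfl⟩
    obtain ⟨U, hU, hVU⟩ := hβref V hV
    exact ⟨emb p n ⁻¹' U, ⟨U, hU, rfl⟩, Set.preimage_mono hVU⟩
  calc widim ε (fun x y : Fin n → K => dist x y)
      ≤ covD α' := iInf₂_le α' ⟨hcov α hαcov, lt_of_le_of_lt hmesh' hαmesh⟩
    _ ≤ ord β' := iInf₂_le β' ⟨hcov β hβcov, hrefines⟩
    _ ≤ ord β := ord_preimage_le _ _

end MeanDimPaper
end
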